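/- arXiv:2210.10166 — 7 statements merged into one kernel-verified Lean document; each statement's English description precedes it below -/
import Mathlib

section
/- (Gale, 1968) For any matroid M on a finite ground set E with an injective weight function w : E → ℝ, the independent set produced by the greedy algorithm (repeatedly adding the highest-weight element that keeps the set independent) Gale dominates every independent set of M, where Gale dominance is with respect to w. -/
attribute [local instance] Classical.propDecidable

noncomputable section

/-- A matroid on a finite ground type, given by its family of independent finsets. -/
structure FinsetMatroid (E : Type*) where
  Indep : Finset E → Prop
  indep_empty : Indep ∅
  indep_subset : ∀ ⦃F G : Finset E⦄, Indep F → G ⊆ F → Indep G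
  indep_exchange : ∀ ⦃F G : Finset E⦄, Indep F → Indep G → G.card < F.card →
    ∃ x ∈ F \ G, Indep (insert x G)

variable {E : Type*} [DecidableEq E]

/-- `l` records a run of the greedy algorithm for matroid `M` under weights `w`:
at each step the added element preserves independence and has maximal weight among
all elements doing so, and at the end no further element can be added. -/
def IsGreedyRun (M : FinsetMatroid E) (w : E → ℝ) (l : List E) : Prop :=
  (∀ (k : ℕ) (hk : k < l.length),
      l.get ⟨k, hk⟩ ∉ (l.take k).toFinset ∧
      M.Indep (insert (l.get ⟨k, hk⟩) (l.take k).toFinset) ∧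
      ∀ x : E, x ∉ (l.take k).toFinset → M.Indep (insert x (l.take k).toFinset) →
        w x ≤ w (l.get ⟨k, hk⟩)) ∧
  ∀ x : E, x ∉ l.toFinset → ¬ M.Indep (insert x l.toFinset)

/-- The `ℓ`-th highest weight (0-indexed) among members of `S`, defaulting to `0`. -/
def nthScore (w : E → ℝ) (S : Finset E) (ℓ : ℕ) : ℝ :=
  (((S.image w).sort (· ≤ ·)).reverse).getD ℓ 0

/-- `I` Gale dominates `J` with respect to the weights `w`. -/
def GaleDom (w : E → ℝ) (I J : Finset E) : Prop :=
  J.card ≤ I.card ∧ ∀ ℓ < J.card, nthScore w J ℓ ≤ nthScore w I ℓ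

/-!
For `ℓ < |J|`, the elements of `J` weighing at least the `ℓ`-th
largest weight of `J` form an independent set with more than `ℓ` elements. Exchanging it against
the first `ℓ` greedy picks yields one of its elements that the greedy algorithm could have added
at step `ℓ`, so the `ℓ`-th greedy pick weighs at least as much. Exchanging `J` against the whole
greedy set, which is maximal, gives `|J| ≤ |greedy set|`. Greedy picks come in strictly
decreasing weight, so the `ℓ`-th pick carries the `ℓ`-th largest weight of the greedy set.
-/

lemma nthScore_toFinset_of_pairwise_gt {α : Type*} [DecidableEq α] {w : α → ℝ} {L : List α}
    (hL : (L.map w).Pairwise (· > ·)) (k : ℕ) :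
    nthScore w L.toFinset k = (L.map w).getD k 0 := by
  have hsort : ((L.map w).reverse.toFinset).sort (· ≤ ·) = (L.map w).reverse :=
    (List.toFinset_sort _ (List.nodup_reverse.2 hL.nodup)).2
      (List.pairwise_reverse.2 (hL.imp le_of_lt))
  have himage : L.toFinset.image w = (L.map w).reverse.toFinset := by
    ext; simp
  rw [nthScore, himage, hsort, List.reverse_reverse]

lemma lt_card_filter_nthScore_le {α : Type*} {w : α → ℝ} (hw : Function.Injective w)
    {J : Finset α} {ℓ : ℕ} (hℓ : ℓ < J.card) :
    ℓ < (J.filter fun x => nthScore w J ℓ ≤ w x).card := by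
  set s := ((J.image w).sort (· ≤ ·)).reverse
  have hdesc : s.Pairwise (· ≥ ·) := List.pairwise_reverse.2 (Finset.pairwise_sort _ _)
  have hℓs : ℓ < s.length := by
    simpa [s, Finset.card_image_of_injective _ hw] using hℓ
  have hscore : nthScore w J ℓ = s[ℓ] := List.getD_eq_getElem _ _ hℓs
  have htop : (s.take (ℓ + 1)).toFinset ⊆ (J.image w).filter (s[ℓ] ≤ ·) := by
    intro a ha
    obtain ⟨i, hi, rfl⟩ := List.getElem_of_mem (List.mem_toFinset.1 ha)
    rw [List.length_take] at hi
    rw [List.getElem_take, Finset.mem_filter]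
    exact ⟨(Finset.mem_sort _).1 (List.mem_reverse.1 (List.getElem_mem _)),
      hdesc.rel_get_of_le (a := ⟨i, by omega⟩) (b := ⟨ℓ, hℓs⟩)
        (Fin.mk_le_mk.2 (by omega))⟩
  have htake : (s.take (ℓ + 1)).toFinset.card = ℓ + 1 := by
    rw [List.toFinset_card_of_nodup ((List.nodup_reverse.2 (Finset.sort_nodup _ _)).sublist
      (List.take_sublist _ _)), List.length_take, min_eq_left hℓs]
  calc ℓ < (s.take (ℓ + 1)).toFinset.card := by omega
    _ ≤ ((J.image w).filter (s[ℓ] ≤ ·)).card := Finset.card_le_card htop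
    _ = _ := by rw [Finset.filter_image, Finset.card_image_of_injective _ hw, hscore]

/-- `indep_exchange` with `F \ G` and `insert` taken for the ambient `DecidableEq E` instance
rather than the classical one the structure was elaborated with. -/
lemma FinsetMatroid.augment (M : FinsetMatroid E) {F G : Finset E} (hF : M.Indep F)
    (hG : M.Indep G) (h : G.card < F.card) : ∃ x ∈ F \ G, M.Indep (insert x G) := by
  convert M.indep_exchange hF hG h

lemma List.toFinset_take_add_one {l : List E} {k : ℕ} (hk : k < l.length) :
    (l.take (k + 1)).toFinset = insert l[k] (l.take k).toFinset := by
  rw [← List.take_concat_get' l k hk, List.toFinset_append]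
  simp

namespace IsGreedyRun

variable {M : FinsetMatroid E} {w : E → ℝ} {l : List E}

lemma indep_take (hl : IsGreedyRun M w l) : ∀ k, M.Indep (l.take k).toFinset
  | 0 => by simpa using M.indep_empty
  | k + 1 => by
    by_cases hk : k < l.length
    · rw [List.toFinset_take_add_one hk]
      exact (hl.1 k hk).2.1
    · rw [List.take_of_length_le (by omega)]
      simpa [List.take_of_length_le (not_lt.1 hk)] using hl.indep_take k

lemma indep (hl : IsGreedyRun M w l) : M.Indep l.toFinset := by
  simpa using hl.indep_take l.length

lemma card_le_card_toFinset (hl : IsGreedyRun M w l) {J : Finset E} (hJ : M.Indep J) :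
    J.card ≤ l.toFinset.card := by
  by_contra! h
  obtain ⟨x, hx, hxl⟩ := M.augment hJ hl.indep h
  exact hl.2 x (Finset.mem_sdiff.1 hx).2 hxl

lemma nodup (hl : IsGreedyRun M w l) : l.Nodup := by
  refine List.pairwise_iff_getElem.2 fun i j _ hj hij heq => (hl.1 j hj).1 ?_
  simp only [List.get_eq_getElem, List.mem_toFinset, ← heq]
  exact List.mem_take_iff_getElem.2 ⟨i, by omega, rfl⟩

lemma weight_getElem_le (hl : IsGreedyRun M w l) {i j : ℕ} (hij : i ≤ j) (hj : j < l.length) :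
    w l[j] ≤ w l[i] := by
  have hsub : (l.take i).toFinset ⊆ (l.take j).toFinset :=
    fun x hx => List.mem_toFinset.2 (List.take_subset_take_left l hij (List.mem_toFinset.1 hx))
  exact (hl.1 i (by omega)).2.2 l[j] (fun h => (hl.1 j hj).1 (hsub h))
    (M.indep_subset (hl.1 j hj).2.1 (Finset.insert_subset_insert _ hsub))

lemma pairwise_map_gt (hl : IsGreedyRun M w l) (hw : Function.Injective w) :
    (l.map w).Pairwise (· > ·) := by
  refine List.pairwise_map.2 (List.pairwise_iff_getElem.2 fun i j _ hj hij => ?_)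
  exact (hl.weight_getElem_le hij.le hj).lt_of_ne
    (hw.ne (List.pairwise_iff_getElem.1 hl.nodup i j _ hj hij).symm)

lemma nthScore_toFinset (hl : IsGreedyRun M w l) (hw : Function.Injective w) {k : ℕ}
    (hk : k < l.length) : nthScore w l.toFinset k = w l[k] := by
  rw [nthScore_toFinset_of_pairwise_gt (hl.pairwise_map_gt hw),
    List.getD_eq_getElem _ _ (by simpa using hk), List.getElem_map]

lemma exists_weight_le_getElem (hl : IsGreedyRun M w l) {J : Finset E} (hJ : M.Indep J)
    {ℓ : ℕ} (hℓ : ℓ < J.card) : ∃ hℓl : ℓ < l.length, ∃ x ∈ J, w x ≤ w l[ℓ] := by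
  have hℓl : ℓ < l.length :=
    hℓ.trans_le ((hl.card_le_card_toFinset hJ).trans (List.toFinset_card_le l))
  have hcard : (l.take ℓ).toFinset.card = ℓ := by
    rw [List.toFinset_card_of_nodup (hl.nodup.sublist (List.take_sublist _ _)),
      List.length_take, min_eq_left hℓl.le]
  obtain ⟨x, hx, hxl⟩ := M.augment hJ (hl.indep_take ℓ) (by omega)
  rw [Finset.mem_sdiff] at hx
  exact ⟨hℓl, x, hx.1, (hl.1 ℓ hℓl).2.2 x hx.2 hxl⟩

end IsGreedyRun

/-- Gale 1968: the greedy independent set Gale dominates every independent set. -/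
theorem greedy_galeDom (M : FinsetMatroid E) (w : E → ℝ) (hw : Function.Injective w)
    (l : List E) (hl : IsGreedyRun M w l) (J : Finset E) (hJ : M.Indep J) :
    GaleDom w l.toFinset J := by
  refine ⟨hl.card_le_card_toFinset hJ, fun ℓ hℓ => ?_⟩
  obtain ⟨hℓl, x, hx, hxl⟩ := hl.exists_weight_le_getElem
    (M.indep_subset hJ (Finset.filter_subset _ J)) (lt_card_filter_nthScore_le hw hℓ)
  rw [hl.nthScore_toFinset hw hℓl]
  exact (Finset.mem_filter.1 hx).2.trans hxl
end
end

section
/- In a model with one open category of capacity q^o and VR-protected categories each with eligibility sets and capacities, with non-overlapping VR categories (each individual eligible for at most one VR category) and distinct merit scores: a choice rule satisfies non-wastefulness, no justified envy, and compliance with VR protections if and only if it equals the Over-and-Above choice rule, which first awards the q^o open positions to the highest-merit individuals, and then for each VR category fills its quota with the highest-merit remaining eligible members. -/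
attribute [local instance] Classical.propDecidable

noncomputable section

variable {ι R : Type*} [Fintype ι] [DecidableEq ι] [Fintype R] [DecidableEq R]

/-- Eligibility sets: everyone is eligible for the open category (`none`),
and `elig c` is the set of members of VR-protected category `c`. -/
def eligOf (elig : R → Finset ι) : Option R → Finset ι
  | none => (Finset.univ : Finset ι)
  | some c => elig c

/-- Aggregate choice: all individuals chosen across all categories. -/
def aggC (C : Finset ι → Option R → Finset ι) (I : Finset ι) : Finset ι :=
  Finset.univ.biUnion fun v => C I v

/-- `C` is a choice rule for capacities `q` and eligibility `elig`: each category chooses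
eligible applicants up to capacity, and no individual is chosen by two categories. -/
def IsChoiceRule (q : Option R → ℕ) (elig : R → Finset ι)
    (C : Finset ι → Option R → Finset ι) : Prop :=
  ∀ I : Finset ι,
    (∀ v, C I v ⊆ I ∩ eligOf elig v) ∧
    (∀ v, (C I v).card ≤ q v) ∧
    (∀ v v', v ≠ v' → Disjoint (C I v) (C I v'))

/-- Non-wastefulness: no position remains idle while an eligible applicant is unchosen. -/
def NonWasteful (q : Option R → ℕ) (elig : R → Finset ι)
    (C : Finset ι → Option R → Finset ι) : Prop :=
  ∀ (I : Finset ι) (v : Option R) (j : ι),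
    j ∈ I → j ∉ aggC C I → (C I v).card < q v → j ∉ eligOf elig v

/-- No justified envy: a chosen individual outscores every eligible entirely-unchosen applicant. -/
def NoJustifiedEnvy (σ : ι → ℝ) (elig : R → Finset ι)
    (C : Finset ι → Option R → Finset ι) : Prop :=
  ∀ (I : Finset ι) (v : Option R) (i j : ι),
    i ∈ C I v → j ∈ I → j ∈ eligOf elig v → j ∉ aggC C I → σ j < σ i

/-- Compliance with VR protections: a VR recipient implies the open category is full, with
every open-category recipient scoring strictly higher. -/
def CompliesVR (σ : ι → ℝ) (q : Option R → ℕ)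
    (C : Finset ι → Option R → Finset ι) : Prop :=
  ∀ (I : Finset ι) (c : R) (i : ι), i ∈ C I (some c) →
    (C I none).card = q none ∧ ∀ j ∈ C I none, σ i < σ j

/-- The (at most) `k` highest merit-score members of `S`. -/
def topK (σ : ι → ℝ) (S : Finset ι) (k : ℕ) : Finset ι :=
  S.filter fun i => (S.filter fun j => σ i ≤ σ j).card ≤ k

/-- The Over-and-Above choice rule: open positions go to the top-merit applicants; then each
VR category's quota is filled by the highest-merit remaining eligible members. -/
def OA (σ : ι → ℝ) (q : Option R → ℕ) (elig : R → Finset ι)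
    (I : Finset ι) : Option R → Finset ι
  | none => topK σ I (q none)
  | some c => topK σ ((I \ topK σ I (q none)) ∩ elig c) (q (some c))

lemma topK_subset (σ : ι → ℝ) (S : Finset ι) (k : ℕ) : topK σ S k ⊆ S :=
  Finset.filter_subset _ _

lemma topK_dom (σ : ι → ℝ) {S : Finset ι} {k : ℕ} {i j : ι}
    (hi : i ∈ topK σ S k) (hj : j ∈ S) (hj' : j ∉ topK σ S k) : σ j < σ i := by
  by_contra h
  push_neg at h
  apply hj'
  simp only [topK, Finset.mem_filter] at hi ⊢
  refine ⟨hj, le_trans (Finset.card_le_card ?_) hi.2⟩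
  intro l hl
  simp only [Finset.mem_filter] at hl ⊢
  exact ⟨hl.1, le_trans h hl.2⟩

lemma topK_card (σ : ι → ℝ) (hσ : Function.Injective σ) (S : Finset ι) (k : ℕ) :
    (topK σ S k).card = min k S.card := by
  classical
  set r : ι → ℕ := fun i => (S.filter fun j => σ i ≤ σ j).card with hr
  have hmono : ∀ x y : ι, x ∈ S → σ x < σ y → r y < r x := by
    intro x y hx hxy
    apply Finset.card_lt_card
    refine ⟨fun l hl => ?_, fun hc => ?_⟩
    · simp only [Finset.mem_filter] at hl ⊢
      exact ⟨hl.1, le_trans hxy.le hl.2⟩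
    · have hx' : x ∈ S.filter fun j => σ x ≤ σ j := by
        simp only [Finset.mem_filter]; exact ⟨hx, le_refl _⟩
      have := hc hx'
      simp only [Finset.mem_filter] at this
      exact absurd this.2 (not_le.mpr hxy)
  have hinj : Set.InjOn r S := by
    intro a ha b hb hab
    rw [Finset.mem_coe] at ha hb
    by_contra hne
    have hσne : σ a ≠ σ b := fun h => hne (hσ h)
    rcases lt_or_gt_of_ne hσne with h | h
    · exact absurd hab (Nat.ne_of_gt (hmono a b ha h))
    · exact absurd hab (Nat.ne_of_lt (hmono b a hb h))
  have hmaps : ∀ i ∈ S, r i ∈ Finset.Icc 1 S.card := by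
    intro i hi
    simp only [Finset.mem_Icc]
    constructor
    · have : i ∈ S.filter fun j => σ i ≤ σ j := by simp [hi]
      exact Finset.card_pos.mpr ⟨i, this⟩
    · exact Finset.card_le_card (Finset.filter_subset _ _)
  have himg : S.image r = Finset.Icc 1 S.card := by
    apply Finset.eq_of_subset_of_card_le
    · intro m hm
      obtain ⟨i, hi, rfl⟩ := Finset.mem_image.mp hm
      exact hmaps i hi
    · rw [Finset.card_image_of_injOn hinj, Nat.card_Icc]
      omega
  have htop : topK σ S k = S.filter fun i => r i ≤ k := rfl
  have hcard : (topK σ S k).card = ((S.image r).filter fun m => m ≤ k).card := by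
    rw [htop, Finset.filter_image]
    rw [Finset.card_image_of_injOn (hinj.mono (Finset.filter_subset _ _))]
  rw [hcard, himg]
  have : (Finset.Icc 1 S.card).filter (fun m => m ≤ k) = Finset.Icc 1 (min k S.card) := by
    ext m
    simp only [Finset.mem_filter, Finset.mem_Icc]
    omega
  rw [this, Nat.card_Icc]
  omega

lemma topK_eq_self (σ : ι → ℝ) (hσ : Function.Injective σ) {S : Finset ι} {k : ℕ}
    (h : S.card ≤ k) : topK σ S k = S := by
  refine (Finset.eq_of_subset_of_card_le (topK_subset σ S k) ?_).symm.symm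
  rw [topK_card σ hσ]
  omega

lemma topK_uniq (σ : ι → ℝ) (hσ : Function.Injective σ) {S T : Finset ι} {k : ℕ}
    (hTS : T ⊆ S) (hcard : T.card = min k S.card)
    (hdom : ∀ i ∈ T, ∀ j ∈ S, j ∉ T → σ j < σ i) :
    T = topK σ S k := by
  by_contra hne
  have hc2 : T.card = (topK σ S k).card := by rw [topK_card σ hσ]; exact hcard
  have h1 : (T \ topK σ S k).Nonempty := by
    rw [Finset.sdiff_nonempty]
    intro hsub
    exact hne (Finset.eq_of_subset_of_card_le hsub (le_of_eq hc2.symm))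
  have h2 : (topK σ S k \ T).Nonempty := by
    rw [Finset.sdiff_nonempty]
    intro hsub
    exact hne (Finset.eq_of_subset_of_card_le hsub (le_of_eq hc2)).symm
  obtain ⟨i, hi⟩ := h1
  obtain ⟨j, hj⟩ := h2
  rw [Finset.mem_sdiff] at hi hj
  have hij : σ i < σ j := topK_dom σ hj.1 (hTS hi.1) hi.2
  have hji : σ j < σ i := hdom i hi.1 j (topK_subset σ S k hj.1) hj.2
  exact absurd hij (not_lt.mpr hji.le)

lemma mem_aggC {C : Finset ι → Option R → Finset ι} {I : Finset ι} {j : ι} :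
    j ∈ aggC C I ↔ ∃ v, j ∈ C I v := by
  simp [aggC]

/-- with non-overlapping VR categories, a choice rule satisfies non-wastefulness,
no justified envy and compliance with VR protections iff it is the Over-and-Above rule. -/
theorem choice_eq_OA_iff (σ : ι → ℝ) (hσ : Function.Injective σ)
    (q : Option R → ℕ) (elig : R → Finset ι)
    (hdisj : ∀ c c' : R, c ≠ c' → Disjoint (elig c) (elig c'))
    (C : Finset ι → Option R → Finset ι) (hC : IsChoiceRule q elig C) :
    (NonWasteful q elig C ∧ NoJustifiedEnvy σ elig C ∧ CompliesVR σ q C) ↔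
      C = OA σ q elig := by
  constructor
  · rintro ⟨hnw, hnje, hvr⟩
    funext I v
    obtain ⟨hsub, hcap, hdisjC⟩ := hC I
    have hCnoneI : C I none ⊆ I := fun i hi => (Finset.mem_inter.mp (hsub none hi)).1
    -- Step 1: the open category chooses the top `q none` applicants.
    have key : C I none = topK σ I (q none) := by
      rcases lt_or_eq_of_le (hcap none) with hlt | heq
      · -- open underfilled: everyone in I is chosen by the open category
        have hVRempty : ∀ c, C I (some c) = ∅ := by
          intro c
          by_contra h
          obtain ⟨i, hi⟩ := Finset.nonempty_iff_ne_empty.mpr h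
          exact absurd ((hvr I c i hi).1) (ne_of_lt hlt)
        have hagg : ∀ j, j ∈ aggC C I → j ∈ C I none := by
          intro j hj
          obtain ⟨v', hv'⟩ := mem_aggC.mp hj
          cases v' with
          | none => exact hv'
          | some c => simp [hVRempty c] at hv'
        have hIC : I ⊆ C I none := by
          intro j hj
          by_contra hjC
          have hjagg : j ∉ aggC C I := fun h => hjC (hagg j h)
          exact (hnw I none j hj hjagg hlt) (Finset.mem_univ j)
        have hEq : C I none = I := Finset.Subset.antisymm hCnoneI hIC
        have hle : I.card ≤ q none := by rw [← hEq]; exact hcap none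
        rw [hEq, topK_eq_self σ hσ hle]
      · -- open full
        have hdom : ∀ i ∈ C I none, ∀ j ∈ I, j ∉ C I none → σ j < σ i := by
          intro i hi j hjI hjC
          by_cases hja : j ∈ aggC C I
          · obtain ⟨v', hv'⟩ := mem_aggC.mp hja
            cases v' with
            | none => exact absurd hv' hjC
            | some c => exact (hvr I c j hv').2 i hi
          · exact hnje I none i j hi hjI (Finset.mem_univ j) hja
        have hcard : (C I none).card = min (q none) I.card := by
          have := Finset.card_le_card hCnoneI
          omega
        exact topK_uniq σ hσ hCnoneI hcard hdom
    cases v with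
    | none => exact key.trans rfl
    | some c =>
      -- Step 2: VR category c chooses the top remaining eligibles.
      set Sc : Finset ι := (I \ C I none) ∩ elig c with hSc
      have hOAc : OA σ q elig I (some c) = topK σ Sc (q (some c)) := by
        simp only [OA, hSc, key]
      rw [hOAc]
      have hsubc : C I (some c) ⊆ Sc := by
        intro i hi
        have h1 := hsub (some c) hi
        rw [Finset.mem_inter] at h1
        have h2 : i ∉ C I none :=
          Finset.disjoint_left.mp (hdisjC (some c) none (by simp)) hi
        exact Finset.mem_inter.mpr ⟨Finset.mem_sdiff.mpr ⟨h1.1, h2⟩, h1.2⟩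
      have hScI : Sc ⊆ I := fun j hj =>
        (Finset.mem_sdiff.mp (Finset.mem_inter.mp hj).1).1
      have hScel : ∀ j ∈ Sc, j ∈ elig c := fun j hj => (Finset.mem_inter.mp hj).2
      have hnotagg : ∀ j ∈ Sc, j ∉ C I (some c) → j ∉ aggC C I := by
        intro j hj hjc ha
        obtain ⟨v', hv'⟩ := mem_aggC.mp ha
        cases v' with
        | none => exact (Finset.mem_sdiff.mp (Finset.mem_inter.mp hj).1).2 hv'
        | some c' =>
          by_cases hcc : c' = c
          · exact hjc (hcc ▸ hv')
          · have h1 : j ∈ elig c' := (Finset.mem_inter.mp (hsub (some c') hv')).2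
            exact Finset.disjoint_left.mp (hdisj c' c hcc) h1 (hScel j hj)
      rcases lt_or_eq_of_le (hcap (some c)) with hlt | heq
      · -- VR underfilled: it takes all of Sc
        have hScC : Sc ⊆ C I (some c) := by
          intro j hj
          by_contra hjc
          exact (hnw I (some c) j (hScI hj) (hnotagg j hj hjc) hlt) (hScel j hj)
        have hEq : C I (some c) = Sc := Finset.Subset.antisymm hsubc hScC
        have hle : Sc.card ≤ q (some c) := by rw [← hEq]; exact hcap (some c)
        rw [hEq, topK_eq_self σ hσ hle]
      · -- VR full
        have hdom : ∀ i ∈ C I (some c), ∀ j ∈ Sc, j ∉ C I (some c) → σ j < σ i := by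
          intro i hi j hj hjc
          exact hnje I (some c) i j hi (hScI hj) (hScel j hj) (hnotagg j hj hjc)
        have hcard : (C I (some c)).card = min (q (some c)) Sc.card := by
          have := Finset.card_le_card hsubc
          omega
        exact topK_uniq σ hσ hsubc hcard hdom
  · -- the OA rule satisfies the three axioms
    rintro rfl
    have haggOA : ∀ (I : Finset ι) (v : Option R) (j : ι),
        j ∈ OA σ q elig I v → j ∈ aggC (OA σ q elig) I := by
      intro I v j hj
      exact mem_aggC.mpr ⟨v, hj⟩
    refine ⟨?_, ?_, ?_⟩
    · -- NonWasteful
      intro I v j hjI hjagg hlt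
      cases v with
      | none =>
        exfalso
        have h1 : (topK σ I (q none)).card = min (q none) I.card := topK_card σ hσ I (q none)
        have h2 : (OA σ q elig I none).card < q none := hlt
        have h3 : I.card < q none := by
          simp only [OA] at h2; omega
        have h4 : topK σ I (q none) = I := topK_eq_self σ hσ h3.le
        exact hjagg (haggOA I none j (by simp only [OA, h4]; exact hjI))
      | some c =>
        intro hje
        have hje' : j ∈ elig c := hje
        set Sc : Finset ι := (I \ topK σ I (q none)) ∩ elig c with hSc
        have h2 : (topK σ Sc (q (some c))).card < q (some c) := hlt
        have h3 : Sc.card < q (some c) := by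
          have := topK_card σ hσ Sc (q (some c)); omega
        have h4 : topK σ Sc (q (some c)) = Sc := topK_eq_self σ hσ h3.le
        by_cases hjt : j ∈ topK σ I (q none)
        · exact hjagg (haggOA I none j hjt)
        · have hjSc : j ∈ Sc :=
            Finset.mem_inter.mpr ⟨Finset.mem_sdiff.mpr ⟨hjI, hjt⟩, hje'⟩
          have : j ∈ OA σ q elig I (some c) := by
            show j ∈ topK σ Sc (q (some c)); rw [h4]; exact hjSc
          exact hjagg (haggOA I (some c) j this)
    · -- NoJustifiedEnvy
      intro I v i j hi hjI hje hjagg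
      have hjt : j ∉ topK σ I (q none) := fun h => hjagg (haggOA I none j h)
      cases v with
      | none => exact topK_dom σ hi hjI hjt
      | some c =>
        have hje' : j ∈ elig c := hje
        set Sc : Finset ι := (I \ topK σ I (q none)) ∩ elig c with hSc
        have hjSc : j ∈ Sc :=
          Finset.mem_inter.mpr ⟨Finset.mem_sdiff.mpr ⟨hjI, hjt⟩, hje'⟩
        have hjt2 : j ∉ topK σ Sc (q (some c)) := fun h => hjagg (haggOA I (some c) j h)
        exact topK_dom σ hi hjSc hjt2
    · -- CompliesVR
      intro I c i hi
      set Sc : Finset ι := (I \ topK σ I (q none)) ∩ elig c with hSc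
      have hiSc : i ∈ Sc := topK_subset σ Sc (q (some c)) hi
      have hiI : i ∈ I := (Finset.mem_sdiff.mp (Finset.mem_inter.mp hiSc).1).1
      have hit : i ∉ topK σ I (q none) := (Finset.mem_sdiff.mp (Finset.mem_inter.mp hiSc).1).2
      constructor
      · show (topK σ I (q none)).card = q none
        have h1 := topK_card σ hσ I (q none)
        by_cases h : q none ≤ I.card
        · omega
        · exfalso
          have h4 : topK σ I (q none) = I := topK_eq_self σ hσ (by omega)
          exact hit (h4.symm ▸ hiI)
      · intro j hj
        exact topK_dom σ hj hiI hit
end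
end

section
/- Every sequential choice rule satisfies non-wastefulness and no justified envy, for any order of precedence over the categories and any (possibly overlapping) profile of category memberships. -/
attribute [local instance] Classical.propDecidable

noncomputable section

variable {ι R : Type*} [Fintype ι] [DecidableEq ι] [Fintype R] [DecidableEq R]

/-- The sequential choice rule: categories are processed in the order given by the list,
each filling its positions by serial dictatorship on the remaining eligible applicants. -/
def seqAssign (σ : ι → ℝ) (q : Option R → ℕ) (elig : R → Finset ι) :
    List (Option R) → Finset ι → Option R → Finset ι
  | [], _, _ => ∅
  | v :: rest, I, u =>
    let chosen := topK σ (I ∩ eligOf elig v) (q v)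
    if u = v then chosen else seqAssign σ q elig rest (I \ chosen) u

/-!
When category `v` comes up, serial dictatorship gives its positions to the `q v` best eligible
members of its pool, the applicants not yet assigned; an applicant whom no category takes lies
in every pool. So if such an applicant `j` is eligible for `v`, `j` was passed over at `v`'s
turn, which means `v` filled all its positions, each with someone of higher merit than `j`.
Distinct scores matter because `topK` cuts at ties: with a tie at the cut-off it takes fewer
than `q v` members while leaving some out.
-/

section TopK

variable {α : Type*} {σ : α → ℝ} {S : Finset α} {k : ℕ} {i j : α}

lemma lt_of_mem_topK_of_notMem_topK (hi : i ∈ topK σ S k) (hjS : j ∈ S)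
    (hj : j ∉ topK σ S k) : σ j < σ i := by
  by_contra! hij
  refine hj (Finset.mem_filter.mpr ⟨hjS, le_trans ?_ (Finset.mem_filter.mp hi).2⟩)
  exact Finset.card_le_card (Finset.monotone_filter_right S fun t _ hjt => hij.trans hjt)

lemma le_card_topK_of_notMem_topK [DecidableEq α] (hσ : Function.Injective σ)
    (hjS : j ∈ S) (hj : j ∉ topK σ S k) : k ≤ (topK σ S k).card := by
  obtain ⟨s, hs, hs_max⟩ :=
    Finset.exists_max_image (S \ topK σ S k) σ ⟨j, Finset.mem_sdiff.mpr ⟨hjS, hj⟩⟩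
  obtain ⟨hsS, hsT⟩ := Finset.mem_sdiff.mp hs
  have hk : k < (S.filter fun t => σ s ≤ σ t).card := by
    simpa [topK, hsS] using hsT
  have hsub : (S.filter fun t => σ s ≤ σ t) ⊆ insert s (topK σ S k) := by
    intro t ht
    obtain ⟨htS, hst⟩ := Finset.mem_filter.mp ht
    by_cases htT : t ∈ topK σ S k
    · exact Finset.mem_insert_of_mem htT
    · have hts : σ t = σ s := le_antisymm (hs_max t (Finset.mem_sdiff.mpr ⟨htS, htT⟩)) hst
      exact Finset.mem_insert.mpr (Or.inl (hσ hts))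
  have := (Finset.card_le_card hsub).trans (Finset.card_insert_le _ _)
  omega

end TopK

section SeqAssign

variable (σ : ι → ℝ) (q : Option R → ℕ) (elig : R → Finset ι)

lemma aggC_seqAssign_cons {w : Option R} {rest : List (Option R)} (hw : w ∉ rest)
    (I : Finset ι) :
    aggC (seqAssign σ q elig (w :: rest)) I =
      topK σ (I ∩ eligOf elig w) (q w) ∪
        aggC (seqAssign σ q elig rest) (I \ topK σ (I ∩ eligOf elig w) (q w)) := by
  have hw_empty : ∀ {L : List (Option R)} (J : Finset ι), w ∉ L →
      seqAssign σ q elig L J w = ∅ := by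
    intro L J hL
    induction L generalizing J with
    | nil => rfl
    | cons u L ih =>
      rw [List.mem_cons, not_or] at hL
      simp [seqAssign, hL.1, ih _ hL.2]
  ext x
  simp only [aggC, seqAssign, Finset.mem_union, Finset.mem_biUnion, Finset.mem_univ, true_and]
  constructor
  · rintro ⟨u, hu⟩
    by_cases huw : u = w
    · subst huw
      exact Or.inl (by simpa using hu)
    · simp only [huw, if_false] at hu
      exact Or.inr ⟨u, hu⟩
  · rintro (hx | ⟨u, hu⟩)
    · exact ⟨w, by simpa using hx⟩
    · have huw : u ≠ w := by
        rintro rfl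
        simp [hw_empty _ hw] at hu
      exact ⟨u, by simpa [huw] using hu⟩

lemma exists_pool_seqAssign {L : List (Option R)} (hL : L.Nodup) {v : Option R} (hv : v ∈ L)
    (I : Finset ι) :
    ∃ J, I \ aggC (seqAssign σ q elig L) I ⊆ J ∧
      seqAssign σ q elig L I v = topK σ (J ∩ eligOf elig v) (q v) := by
  induction L generalizing I with
  | nil => exact absurd hv List.not_mem_nil
  | cons w rest ih =>
    obtain ⟨hw, hrest⟩ := List.nodup_cons.mp hL
    by_cases hvw : v = w
    · subst hvw
      exact ⟨I, Finset.sdiff_subset, by simp [seqAssign]⟩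
    · set chosen := topK σ (I ∩ eligOf elig w) (q w)
      obtain ⟨J, hJ, hvJ⟩ := ih hrest ((List.mem_cons.mp hv).resolve_left hvw) (I \ chosen)
      refine ⟨J, ?_, by simpa [seqAssign, hvw] using hvJ⟩
      rwa [aggC_seqAssign_cons σ q elig hw, ← Finset.sup_eq_union, ← sdiff_sdiff_left]

end SeqAssign

/-- every sequential choice rule (for any order of precedence covering all
categories, and any possibly overlapping eligibility structure) satisfies non-wastefulness
and no justified envy. -/
theorem seq_nonWasteful_noJustifiedEnvy (σ : ι → ℝ) (hσ : Function.Injective σ)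
    (q : Option R → ℕ) (elig : R → Finset ι)
    (order : List (Option R)) (hnd : order.Nodup) (hall : ∀ v : Option R, v ∈ order) :
    NonWasteful q elig (seqAssign σ q elig order) ∧
      NoJustifiedEnvy σ elig (seqAssign σ q elig order) := by
  have pool : ∀ I v j, j ∈ I → j ∈ eligOf elig v →
      j ∉ aggC (seqAssign σ q elig order) I →
      ∃ S, j ∈ S ∧ j ∉ topK σ S (q v) ∧ seqAssign σ q elig order I v = topK σ S (q v) := by
    intro I v j hjI hje hj
    obtain ⟨J, hJ, hvJ⟩ := exists_pool_seqAssign σ q elig hnd (hall v) I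
    have hjJ : j ∈ J := hJ (Finset.mem_sdiff.mpr ⟨hjI, hj⟩)
    refine ⟨J ∩ eligOf elig v, Finset.mem_inter.mpr ⟨hjJ, hje⟩, fun hjv => hj ?_, hvJ⟩
    exact Finset.mem_biUnion.mpr ⟨v, Finset.mem_univ v, hvJ ▸ hjv⟩
  refine ⟨fun I v j hjI hj hvacant hje => ?_, fun I v i j hi hjI hje hj => ?_⟩
  · obtain ⟨S, hjS, hjT, hvS⟩ := pool I v j hjI hje hj
    have := le_card_topK_of_notMem_topK hσ hjS hjT
    rw [hvS] at hvacant
    omega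
  · obtain ⟨S, hjS, hjT, hvS⟩ := pool I v j hjI hje hj
    exact lt_of_mem_topK_of_notMem_topK (hvS ▸ hi) hjS hjT
end
end

section
/- Every sequential choice rule whose order of precedence processes the open category first satisfies compliance with VR protections. -/
attribute [local instance] Classical.propDecidable

noncomputable section

variable {ι R : Type*} [Fintype ι] [DecidableEq ι] [Fintype R] [DecidableEq R]

lemma seqAssign_subset (σ : ι → ℝ) (q : Option R → ℕ) (elig : R → Finset ι) :
    ∀ (L : List (Option R)) (I : Finset ι) (u : Option R),
      seqAssign σ q elig L I u ⊆ I
  | [], I, u => by simp [seqAssign]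
  | v :: rest, I, u => by
    simp only [seqAssign]
    split
    · exact (topK_subset ..).trans Finset.inter_subset_left
    · exact (seqAssign_subset σ q elig rest _ u).trans Finset.sdiff_subset

lemma rank_lt_rank (σ : ι → ℝ) (S : Finset ι) {x y : ι} (hx : x ∈ S)
    (hxy : σ x < σ y) :
    (S.filter fun j => σ y ≤ σ j).card < (S.filter fun j => σ x ≤ σ j).card := by
  apply Finset.card_lt_card
  refine (Finset.ssubset_iff_of_subset ?_).2 ⟨x, ?_, ?_⟩
  · intro z hz
    simp only [Finset.mem_filter] at hz ⊢
    exact ⟨hz.1, le_trans hxy.le hz.2⟩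
  · exact Finset.mem_filter.2 ⟨hx, le_refl _⟩
  · simp only [Finset.mem_filter]
    exact fun h => absurd h.2 (not_le.2 hxy)

lemma topK_full (σ : ι → ℝ) (hσ : Function.Injective σ) (S : Finset ι) (k : ℕ)
    {i : ι} (hi : i ∈ S) (hni : i ∉ topK σ S k) :
    (topK σ S k).card = k ∧ ∀ j ∈ topK σ S k, σ i < σ j := by
  set rank : ι → ℕ := fun x => (S.filter fun j => σ x ≤ σ j).card with hrank
  have hranki : k < rank i := by
    by_contra h
    refine hni ?_
    simp only [topK, Finset.mem_filter]
    exact ⟨hi, not_lt.1 h⟩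
  have horder : ∀ j ∈ topK σ S k, σ i < σ j := by
    intro j hj
    have hjS : j ∈ S := topK_subset σ S k hj
    have hrj : rank j ≤ k := (Finset.mem_filter.1 hj).2
    rcases lt_trichotomy (σ i) (σ j) with h | h | h
    · exact h
    · exact absurd (hσ h) (by rintro rfl; omega)
    · have h' : rank i < rank j := rank_lt_rank σ S hjS h
      omega
  refine ⟨?_, horder⟩
  have hinj : Set.InjOn rank S := by
    intro x hx y hy hxy
    rcases lt_trichotomy (σ x) (σ y) with h | h | h
    · have h' : rank y < rank x := rank_lt_rank σ S hx h; omega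
    · exact hσ h
    · have h' : rank x < rank y := rank_lt_rank σ S hy h; omega
  have hmem : ∀ x ∈ S, rank x ∈ Finset.Icc 1 S.card := by
    intro x hx
    refine Finset.mem_Icc.2 ⟨?_, Finset.card_filter_le _ _⟩
    have : x ∈ S.filter fun j => σ x ≤ σ j := Finset.mem_filter.2 ⟨hx, le_refl _⟩
    exact Finset.card_pos.2 ⟨x, this⟩
  have himg : S.image rank = Finset.Icc 1 S.card := by
    apply Finset.eq_of_subset_of_card_le
    · intro n hn
      obtain ⟨x, hx, rfl⟩ := Finset.mem_image.1 hn
      exact hmem x hx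
    · rw [Finset.card_image_of_injOn hinj, Nat.card_Icc]
      omega
  have hkle : k < S.card := lt_of_lt_of_le hranki (Finset.card_filter_le _ _)
  have htopk : topK σ S k = S.filter fun x => rank x ≤ k := rfl
  have hinj2 : Set.InjOn rank (topK σ S k) :=
    hinj.mono (fun x hx => topK_subset σ S k hx)
  calc (topK σ S k).card = ((topK σ S k).image rank).card :=
        (Finset.card_image_of_injOn hinj2).symm
    _ = ((S.image rank).filter fun n => n ≤ k).card := by
        rw [htopk, Finset.filter_image]
    _ = k := by
        rw [himg]
        have : (Finset.Icc 1 S.card).filter (fun n => n ≤ k) = Finset.Icc 1 k := by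
          ext n
          simp only [Finset.mem_filter, Finset.mem_Icc]
          omega
        rw [this, Nat.card_Icc]
        omega

/-- every sequential choice rule processing the open category first satisfies
compliance with VR protections. -/
theorem seq_compliesVR (σ : ι → ℝ) (hσ : Function.Injective σ)
    (q : Option R → ℕ) (elig : R → Finset ι)
    (rest : List (Option R)) (hnd : ((none : Option R) :: rest).Nodup)
    (hall : ∀ v : Option R, v ∈ (none : Option R) :: rest) :
    CompliesVR σ q (seqAssign σ q elig ((none : Option R) :: rest)) := by
  intro I c i hi
  have hIeq : I ∩ eligOf elig (none : Option R) = I := by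
    simp [eligOf]
  have hopen : seqAssign σ q elig ((none : Option R) :: rest) I none
      = topK σ I (q none) := by
    simp [seqAssign, hIeq]
  simp only [seqAssign] at hi
  rw [if_neg (by simp)] at hi
  have hiI : i ∈ I \ topK σ I (q none) := by
    have := seqAssign_subset σ q elig rest _ (some c) hi
    rwa [hIeq] at this
  obtain ⟨hiI', hni⟩ := Finset.mem_sdiff.1 hiI
  obtain ⟨h1, h2⟩ := topK_full σ hσ I (q none) hiI' hni
  rw [hopen]
  exact ⟨h1, h2⟩
end
end

section
/- For any choice rule satisfying non-wastefulness, no justified envy, and compliance with VR protections (under any, possibly overlapping, membership profile), and for any applicant set I, the set of open-category recipients equals the set of open-category recipients under the Over-and-Above rule (i.e., the min(|I|, q^o) highest-merit applicants in I). -/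
attribute [local instance] Classical.propDecidable

noncomputable section

variable {ι R : Type*} [Fintype ι] [DecidableEq ι] [Fintype R] [DecidableEq R]

/-- under the three axioms, the open-category recipients are exactly the
`min(|I|, q^o)` highest-merit applicants (the Over-and-Above open component). -/
theorem open_component_determined (σ : ι → ℝ) (hσ : Function.Injective σ)
    (q : Option R → ℕ) (elig : R → Finset ι)
    (C : Finset ι → Option R → Finset ι) (hC : IsChoiceRule q elig C)
    (hnw : NonWasteful q elig C) (hnje : NoJustifiedEnvy σ elig C)
    (hcvr : CompliesVR σ q C) :
    ∀ I : Finset ι, C I none = topK σ I (q none) := by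
  intro I
  obtain ⟨hsub, hcap, hdisj⟩ := hC I
  -- upward closure of the open set
  have hup : ∀ i ∈ C I none, ∀ j ∈ I, σ i < σ j → j ∈ C I none := by
    intro i hi j hj hij
    by_contra hjA
    by_cases hagg : j ∈ aggC C I
    · obtain ⟨v, -, hv⟩ := Finset.mem_biUnion.1 hagg
      match v with
      | none => exact hjA hv
      | some c => exact absurd hij (not_lt.2 (le_of_lt ((hcvr I c j hv).2 i hi)))
    · have := hnje I none i j hi hj (by simp [eligOf]) hagg
      linarith
  rcases lt_or_eq_of_le (hcap none) with hlt | heq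
  · -- open category not full ⇒ everyone is chosen by open
    have hIA : I ⊆ C I none := by
      intro j hj
      by_contra hjA
      by_cases hagg : j ∈ aggC C I
      · obtain ⟨v, -, hv⟩ := Finset.mem_biUnion.1 hagg
        match v with
        | none => exact hjA hv
        | some c => exact absurd (hcvr I c j hv).1 (Nat.ne_of_lt hlt)
      · exact hnw I none j hj hagg hlt (by simp [eligOf])
    have hAI : C I none ⊆ I := fun x hx => (Finset.mem_inter.1 (hsub none hx)).1
    have hAeq : C I none = I := le_antisymm hAI hIA
    have htop : topK σ I (q none) = I := by
      apply Finset.filter_true_of_mem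
      intro i _
      calc (I.filter fun j => σ i ≤ σ j).card ≤ I.card := Finset.card_filter_le _ _
        _ = (C I none).card := by rw [hAeq]
        _ ≤ q none := hcap none
    rw [htop, hAeq]
  · -- open category full
    apply Finset.ext
    intro i
    simp only [topK, Finset.mem_filter]
    constructor
    · intro hi
      have hiI : i ∈ I := (Finset.mem_inter.1 (hsub none hi)).1
      refine ⟨hiI, ?_⟩
      have hfsub : (I.filter fun j => σ i ≤ σ j) ⊆ C I none := by
        intro j hj
        obtain ⟨hjI, hij⟩ := Finset.mem_filter.1 hj
        rcases eq_or_lt_of_le hij with h | h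
        · exact hσ h ▸ hi
        · exact hup i hi j hjI h
      calc (I.filter fun j => σ i ≤ σ j).card ≤ (C I none).card :=
            Finset.card_le_card hfsub
        _ = q none := heq
    · rintro ⟨hiI, hcard⟩
      by_contra hiA
      have hsub2 : insert i (C I none) ⊆ I.filter fun j => σ i ≤ σ j := by
        intro j hj
        rcases Finset.mem_insert.1 hj with rfl | hj
        · exact Finset.mem_filter.2 ⟨hiI, le_refl _⟩
        · refine Finset.mem_filter.2 ⟨(Finset.mem_inter.1 (hsub none hj)).1, ?_⟩
          by_contra hle
          push_neg at hle
          exact hiA (hup j hj i hiI hle)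
      have h2 := Finset.card_le_card hsub2
      rw [Finset.card_insert_of_notMem hiA, heq] at h2
      omega
end
end

section
/- The EWS-last sequential choice rule under the expanded membership profile ρ* abides by the Equality Code: for every applicant set I, no nonempty set J ⊆ 𝒥 ∩ I satisfies that every member of J is rejected under ρ* but accepted when the members of J are given membership only in category e. -/
/-!
Every member of `𝒥` already holds `e` under `ρ*`, so reassigning the members of `J` the
membership `{e}` only removes them from some eligibility sets. If all of `J` are rejected under
`ρ*`, then at every stage of the sequential rule they lie outside the chosen set, and with
distinct merit scores deleting unchosen applicants from a pool does not change its top `k`.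
Hence the whole outcome is unchanged, and no member of `J` can become accepted.
-/

attribute [local instance] Classical.propDecidable

noncomputable section

variable {ι R : Type*} [Fintype ι] [DecidableEq ι] [Fintype R] [DecidableEq R]

/-- Eligibility sets induced by a membership profile `ρ`. -/
def eligρ (ρ : ι → Finset R) (c : R) : Finset ι :=
  Finset.univ.filter fun i => c ∈ ρ i

/-- Aggregate outcome of the Over-and-Above rule under membership profile `ρ`. -/
def aggOA (σ : ι → ℝ) (q : Option R → ℕ) (ρ : ι → Finset R) (I : Finset ι) : Finset ι :=
  aggC (OA σ q (eligρ ρ)) I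

/-- The profile `(ρ₋ⱼ, ρ̃ⱼ)`: each member of `J` is reassigned membership `{e}` only. -/
def updProf (ρ : ι → Finset R) (e : R) (J : Finset ι) : ι → Finset R :=
  fun i => if i ∈ J then {e} else ρ i

/-- `J ⊆ 𝒥 ∩ I` suffers from a violation of the Equality Code under the Over-and-Above rule
with profile `ρ` for `I`: every member of `J` is unchosen under `ρ` but chosen once the
members of `J` are reassigned membership `{e}`. -/
def Suffers (σ : ι → ℝ) (q : Option R → ℕ) (ρ : ι → Finset R) (e : R)
    (JJ I J : Finset ι) : Prop :=
  J ⊆ JJ ∩ I ∧ ∀ j ∈ J, j ∉ aggOA σ q ρ I ∧ j ∈ aggOA σ q (updProf ρ e J) I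

/-- `J` is a maximal set of individuals suffering from a violation of the Equality Code. -/
def MaximalSuffers (σ : ι → ℝ) (q : Option R → ℕ) (ρ : ι → Finset R) (e : R)
    (JJ I J : Finset ι) : Prop :=
  J ⊆ (JJ ∩ I) \ aggOA σ q ρ I ∧
  Suffers σ q ρ e JJ I J ∧
  ∀ J' ⊆ (JJ ∩ I) \ aggOA σ q ρ I, J ⊂ J' →
    ¬ Suffers σ q ρ e JJ I J' ∧ J ⊆ aggOA σ q (updProf ρ e J') I

/-- The expanded profile `ρ*`: members of `𝒥` get an additional membership of `e`. -/
def ρstar (ρ : ι → Finset R) (e : R) (JJ : Finset ι) : ι → Finset R :=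
  fun i => if i ∈ JJ then insert e (ρ i) else ρ i

/-- Aggregate outcome of the sequential choice rule under profile `ρ` and the given order. -/
def aggSeq (σ : ι → ℝ) (q : Option R → ℕ) (ρ : ι → Finset R)
    (order : List (Option R)) (I : Finset ι) : Finset ι :=
  Finset.univ.biUnion (seqAssign σ q (eligρ ρ) order I)

/-- The EWS-last order of precedence: open first, caste-based categories (listed by `L`), `e` last. -/
def ewsLastOrder (e : R) (L : List R) : List (Option R) :=
  (none : Option R) :: (L.map some ++ [some e])

end

variable {ι R : Type*}

section TopK

variable {σ : ι → ℝ}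

lemma card_filter_le_lt_of_lt {S : Finset ι} {i j : ι} (hi : i ∈ S) (hij : σ i < σ j) :
    (S.filter (σ j ≤ σ ·)).card < (S.filter (σ i ≤ σ ·)).card := by
  refine Finset.card_lt_card (Finset.ssubset_iff_of_subset ?_ |>.mpr ⟨i, ?_, ?_⟩)
  · exact Finset.monotone_filter_right S fun x _ hx => hij.le.trans hx
  · simp [hi]
  · simp [hij]

variable [DecidableEq ι]

lemma topK_erase (hσ : Function.Injective σ) {S : Finset ι} {k : ℕ} {j : ι}
    (hj : j ∉ topK σ S k) : topK σ (S.erase j) k = topK σ S k := by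
  by_cases hjS : j ∈ S
  swap
  · rw [Finset.erase_eq_of_notMem hjS]
  have hjk : k < (S.filter (σ j ≤ σ ·)).card := by simpa [topK, hjS] using hj
  ext i
  simp only [topK, Finset.mem_filter, Finset.mem_erase, Finset.filter_erase]
  constructor
  · rintro ⟨hij, hiS, hcard⟩
    refine ⟨hiS, ?_⟩
    rcases lt_or_gt_of_ne (hσ.ne hij) with hlt | hgt
    · have hrank := card_filter_le_lt_of_lt hiS hlt
      have hjmem : j ∈ S.filter (σ i ≤ σ ·) := by simp [hjS, hlt.le]
      rw [Finset.card_erase_of_mem hjmem] at hcard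
      omega
    · rwa [Finset.erase_eq_of_notMem (by simp [hgt])] at hcard
  · rintro ⟨hiS, hcard⟩
    refine ⟨?_, hiS, Finset.card_erase_le.trans hcard⟩
    rintro rfl
    omega

lemma topK_sdiff (hσ : Function.Injective σ) {S J : Finset ι} {k : ℕ}
    (hJ : Disjoint J (topK σ S k)) : topK σ (S \ J) k = topK σ S k := by
  induction J using Finset.induction_on with
  | empty => simp
  | insert a J _ ih =>
    rw [Finset.disjoint_insert_left] at hJ
    rw [Finset.sdiff_insert, topK_erase hσ (by rw [ih hJ.2]; exact hJ.1), ih hJ.2]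

lemma topK_eq_of_sdiff_subset (hσ : Function.Injective σ) {S T J : Finset ι} {k : ℕ}
    (hTS : T ⊆ S) (hST : S \ J ⊆ T) (hJ : Disjoint J (topK σ S k)) :
    topK σ T k = topK σ S k := by
  rw [← Finset.sdiff_sdiff_eq_self hTS]
  exact topK_sdiff hσ (hJ.mono_left (sdiff_le_comm.mp hST))

end TopK

section Eligibility

variable [Fintype ι]

lemma eligOf_mono {E E' : R → Finset ι} (h : ∀ c, E' c ⊆ E c) (v : Option R) :
    eligOf E' v ⊆ eligOf E v := by
  cases v with
  | none => exact subset_rfl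
  | some c => exact h c

lemma eligOf_sdiff_subset [DecidableEq ι] {E E' : R → Finset ι} {J : Finset ι}
    (h : ∀ c, E c \ J ⊆ E' c) (v : Option R) : eligOf E v \ J ⊆ eligOf E' v := by
  cases v with
  | none => exact Finset.sdiff_subset
  | some c => exact h c

variable [DecidableEq R]

@[simp]
lemma mem_eligρ {ρ : ι → Finset R} {c : R} {i : ι} : i ∈ eligρ ρ c ↔ c ∈ ρ i := by
  simp [eligρ]

variable [DecidableEq ι]

lemma eligρ_updProf_subset {ρ : ι → Finset R} {e : R} {J : Finset ι}
    (he : ∀ j ∈ J, e ∈ ρ j) (c : R) : eligρ (updProf ρ e J) c ⊆ eligρ ρ c := by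
  intro i
  by_cases hi : i ∈ J
  · simp +contextual [updProf, hi, he i hi]
  · simp [updProf, hi]

lemma eligρ_sdiff_subset_updProf (ρ : ι → Finset R) (e : R) (J : Finset ι) (c : R) :
    eligρ ρ c \ J ⊆ eligρ (updProf ρ e J) c := by
  intro i
  simp +contextual [updProf]

end Eligibility

section Sequential

variable [Fintype ι] [DecidableEq ι] [DecidableEq R] {σ : ι → ℝ} {q : Option R → ℕ}

lemma seqAssign_eq_empty_of_notMem (E : R → Finset ι) {order : List (Option R)}
    {u : Option R} (hu : u ∉ order) (I : Finset ι) : seqAssign σ q E order I u = ∅ := by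
  induction order generalizing I with
  | nil => rfl
  | cons v rest ih =>
    rw [List.mem_cons, not_or] at hu
    simp only [seqAssign, if_neg hu.1]
    exact ih hu.2 _

lemma seqAssign_eq_of_disjoint (hσ : Function.Injective σ) {E E' : R → Finset ι}
    {J : Finset ι} (hE' : ∀ c, E' c ⊆ E c) (hE : ∀ c, E c \ J ⊆ E' c)
    {order : List (Option R)} (hnd : order.Nodup) {I : Finset ι}
    (hrej : ∀ u, Disjoint J (seqAssign σ q E order I u)) :
    seqAssign σ q E' order I = seqAssign σ q E order I := by
  induction order generalizing I with
  | nil => rfl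
  | cons v rest ih =>
    obtain ⟨hv, hnd⟩ := List.nodup_cons.mp hnd
    have hchosen : topK σ (I ∩ eligOf E' v) (q v) = topK σ (I ∩ eligOf E v) (q v) := by
      refine topK_eq_of_sdiff_subset hσ (Finset.inter_subset_inter_left (eligOf_mono hE' v))
        ?_ (by simpa [seqAssign] using hrej v)
      rw [Finset.inter_sdiff_assoc]
      exact Finset.inter_subset_inter_left (eligOf_sdiff_subset hE v)
    have hrest : ∀ u, Disjoint J
        (seqAssign σ q E rest (I \ topK σ (I ∩ eligOf E v) (q v)) u) := by
      intro u
      by_cases huv : u = v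
      · rw [huv, seqAssign_eq_empty_of_notMem E hv]
        exact Finset.disjoint_empty_right J
      · simpa [seqAssign, huv] using hrej u
    funext u
    simp only [seqAssign, hchosen, ih hnd hrest]

lemma aggSeq_updProf_eq_of_disjoint [Fintype R] (hσ : Function.Injective σ)
    {ρ : ι → Finset R} {e : R} {J I : Finset ι} {order : List (Option R)} (hnd : order.Nodup)
    (he : ∀ j ∈ J, e ∈ ρ j) (hrej : Disjoint J (aggSeq σ q ρ order I)) :
    aggSeq σ q (updProf ρ e J) order I = aggSeq σ q ρ order I := by
  unfold aggSeq
  rw [seqAssign_eq_of_disjoint hσ (eligρ_updProf_subset he) (eligρ_sdiff_subset_updProf ρ e J)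
    hnd fun u => (Finset.disjoint_biUnion_right _ _ _).mp hrej u (Finset.mem_univ u)]

end Sequential

lemma mem_ρstar_self [DecidableEq ι] [DecidableEq R] {ρ : ι → Finset R} {e : R}
    {JJ : Finset ι} {j : ι} (hj : j ∈ JJ) : e ∈ ρstar ρ e JJ j := by
  simp [ρstar, hj]

lemma ewsLastOrder_nodup {e : R} {L : List R} (hL : L.Nodup) (heL : e ∉ L) :
    (ewsLastOrder e L).Nodup := by
  have hLe : (L ++ [e]).Nodup := by simpa using hL.concat heL
  rw [ewsLastOrder, ← List.map_singleton, ← List.map_append]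
  exact List.nodup_cons.mpr ⟨by simp, hLe.map (Option.some_injective R)⟩

variable [Fintype ι] [DecidableEq ι] [Fintype R] [DecidableEq R]

theorem ewsLast_abides_equality_code_general (σ : ι → ℝ) (hσ : Function.Injective σ)
    (q : Option R → ℕ) (ρ : ι → Finset R) (e : R) (JJ : Finset ι)
    (L : List R) (hLnd : L.Nodup) (heL : e ∉ L) :
    ∀ I : Finset ι, ∀ J : Finset ι, J.Nonempty → J ⊆ JJ ∩ I →
      ¬ (∀ j ∈ J, j ∉ aggSeq σ q (ρstar ρ e JJ) (ewsLastOrder e L) I ∧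
          j ∈ aggSeq σ q (updProf (ρstar ρ e JJ) e J) (ewsLastOrder e L) I) := by
  intro I J ⟨j, hj⟩ hJ hviolation
  have hrej : Disjoint J (aggSeq σ q (ρstar ρ e JJ) (ewsLastOrder e L) I) :=
    Finset.disjoint_left.mpr fun i hi => (hviolation i hi).1
  have hunchanged := aggSeq_updProf_eq_of_disjoint hσ (ewsLastOrder_nodup hLnd heL)
    (fun i hi => mem_ρstar_self (Finset.mem_inter.mp (hJ hi)).1) hrej
  exact (hviolation j hj).1 (hunchanged ▸ (hviolation j hj).2)

/-- the EWS-last sequential rule under the expanded profile `ρ*` abides by the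
Equality Code: no nonempty `J ⊆ 𝒥 ∩ I` has all its members rejected under `ρ*` yet accepted
when given membership only in `e`. -/
theorem ewsLast_abides_equality_code (σ : ι → ℝ) (hσ : Function.Injective σ)
    (q : Option R → ℕ) (ρ : ι → Finset R) (hρ : ∀ i, (ρ i).card ≤ 1) (e : R)
    (JJ : Finset ι) (hJJ : ∀ j ∈ JJ, (ρ j).Nonempty ∧ e ∉ ρ j)
    (L : List R) (hLnd : L.Nodup) (heL : e ∉ L) (hLall : ∀ c : R, c ≠ e → c ∈ L) :
    ∀ I : Finset ι, ∀ J : Finset ι, J.Nonempty → J ⊆ JJ ∩ I →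
      ¬ (∀ j ∈ J, j ∉ aggSeq σ q (ρstar ρ e JJ) (ewsLastOrder e L) I ∧
          j ∈ aggSeq σ q (updProf (ρstar ρ e JJ) e J) (ewsLastOrder e L) I) :=
  ewsLast_abides_equality_code_general σ hσ q ρ e JJ L hLnd heL
end

section
/- If every individual is eligible for the EWS category e, then the EWS-first sequential choice rule (open category first, e second, then the other VR categories) selects for categories o and e together exactly the min(|I|, q^o + q^e) highest merit-score applicants — i.e., it acts as if the q^e EWS positions were added to the open category. -/
attribute [local instance] Classical.propDecidable

/-!
When everyone is eligible for `e`, the first two rounds of the sequential rule are serial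
dictatorships on all remaining applicants, so it suffices that the top `a` applicants together with
the top `b` of the rest are the top `a + b`. Rank each applicant by the number of applicants scoring
at least as high. Everyone in the top `a` outscores every other applicant `i`, so removing them
lowers the rank of `i` by exactly their number; since `σ` is injective, ranks are distinct, so at
most `a` applicants have rank `≤ a` and at most `b` have rank in `(a, a + b]`.
-/

open Finset

section MeritRank

variable {ι : Type*} (σ : ι → ℝ) {S : Finset ι} {i j : ι} {k : ℕ}

noncomputable def meritRank (S : Finset ι) (i : ι) : ℕ := #(S.filter fun j => σ i ≤ σ j)

theorem mem_topK : i ∈ topK σ S k ↔ i ∈ S ∧ meritRank σ S i ≤ k := mem_filter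

theorem meritRank_pos (hi : i ∈ S) : 0 < meritRank σ S i :=
  card_pos.mpr ⟨i, mem_filter.mpr ⟨hi, le_rfl⟩⟩

theorem meritRank_le_of_le (h : σ j ≤ σ i) : meritRank σ S i ≤ meritRank σ S j :=
  card_le_card fun _ hx => by
    rw [mem_filter] at hx ⊢
    exact ⟨hx.1, h.trans hx.2⟩

theorem meritRank_lt_of_lt (hi : i ∈ S) (h : σ i < σ j) : meritRank σ S j < meritRank σ S i := by
  refine card_lt_card ⟨fun x hx => ?_, fun hsub => ?_⟩
  · rw [mem_filter] at hx ⊢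
    exact ⟨hx.1, h.le.trans hx.2⟩
  · exact (mem_filter.mp (hsub (mem_filter.mpr ⟨hi, le_rfl⟩))).2.not_gt h

theorem meritRank_injOn (hσ : Function.Injective σ) : Set.InjOn (meritRank σ S) S := by
  intro i hi j hj h
  rcases lt_trichotomy (σ i) (σ j) with hlt | heq | hlt
  · exact absurd h (meritRank_lt_of_lt σ hi hlt).ne'
  · exact hσ heq
  · exact absurd h (meritRank_lt_of_lt σ hj hlt).ne

theorem card_filter_meritRank_Ioc_le (hσ : Function.Injective σ) (S : Finset ι) (a b : ℕ) :
    #(S.filter fun j => meritRank σ S j ∈ Ioc a (a + b)) ≤ b := by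
  have := card_le_card_of_injOn (t := Ioc a (a + b)) (meritRank σ S)
    (fun j hj => (mem_filter.mp hj).2) ((meritRank_injOn σ hσ).mono (filter_subset _ S))
  simpa using this

theorem card_topK_le (hσ : Function.Injective σ) (S : Finset ι) (k : ℕ) : #(topK σ S k) ≤ k := by
  refine (card_le_card fun j hj => ?_).trans (card_filter_meritRank_Ioc_le σ hσ S 0 k)
  obtain ⟨hjS, hjk⟩ := (mem_topK σ).mp hj
  exact mem_filter.mpr ⟨hjS, mem_Ioc.mpr ⟨meritRank_pos σ hjS, by omega⟩⟩

theorem lt_of_mem_topK_of_not_mem (hj : j ∈ topK σ S k) (hi : i ∈ S) (hik : i ∉ topK σ S k) :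
    σ i < σ j := by
  by_contra! h
  exact hik ((mem_topK σ).mpr ⟨hi, (meritRank_le_of_le σ h).trans ((mem_topK σ).mp hj).2⟩)

variable [DecidableEq ι]

theorem meritRank_sdiff_add_card {A : Finset ι} (hAS : A ⊆ S) (hA : ∀ j ∈ A, σ i ≤ σ j) :
    meritRank σ (S \ A) i + #A = meritRank σ S i := by
  have hfilter : (S \ A).filter (fun j => σ i ≤ σ j) = S.filter (fun j => σ i ≤ σ j) \ A := by
    ext j
    simp only [mem_filter, mem_sdiff]
    tauto
  rw [meritRank, meritRank, hfilter]
  exact card_sdiff_add_card_eq_card fun j hj => mem_filter.mpr ⟨hAS hj, hA j hj⟩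

theorem meritRank_sdiff_topK_add_card (hi : i ∈ S) (hik : i ∉ topK σ S k) :
    meritRank σ (S \ topK σ S k) i + #(topK σ S k) = meritRank σ S i :=
  meritRank_sdiff_add_card σ (filter_subset _ S)
    fun _ hj => (lt_of_mem_topK_of_not_mem σ hj hi hik).le

/-- Everyone scoring at least `σ i` is among the top `a` or has rank in `(a, a + b]`. -/
theorem meritRank_le_card_topK_add (hσ : Function.Injective σ) {a b : ℕ}
    (hib : meritRank σ S i ≤ a + b) : meritRank σ S i ≤ #(topK σ S a) + b := by
  set band := S.filter fun j => meritRank σ S j ∈ Ioc a (a + b)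
  have hcover : S.filter (fun j => σ i ≤ σ j) ⊆ topK σ S a ∪ band := by
    intro j hj
    obtain ⟨hjS, hij⟩ := mem_filter.mp hj
    by_cases hja : meritRank σ S j ≤ a
    · exact mem_union_left _ ((mem_topK σ).mpr ⟨hjS, hja⟩)
    · exact mem_union_right _ (mem_filter.mpr
        ⟨hjS, mem_Ioc.mpr ⟨by omega, (meritRank_le_of_le σ hij).trans hib⟩⟩)
  calc meritRank σ S i ≤ #(topK σ S a ∪ band) := card_le_card hcover
    _ ≤ #(topK σ S a) + #band := card_union_le _ _
    _ ≤ #(topK σ S a) + b := Nat.add_le_add_left (card_filter_meritRank_Ioc_le σ hσ S a b) _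

theorem topK_union_topK_sdiff (hσ : Function.Injective σ) (S : Finset ι) (a b : ℕ) :
    topK σ S a ∪ topK σ (S \ topK σ S a) b = topK σ S (a + b) := by
  ext i
  by_cases hia : i ∈ topK σ S a
  · obtain ⟨hiS, hrank⟩ := (mem_topK σ).mp hia
    simp only [mem_union, hia, true_or, true_iff]
    exact (mem_topK σ).mpr ⟨hiS, hrank.trans (Nat.le_add_right a b)⟩
  by_cases hiS : i ∈ S
  · have hsplit := meritRank_sdiff_topK_add_card σ hiS hia
    have hcard := card_topK_le σ hσ S a
    have hcover : meritRank σ S i ≤ a + b → meritRank σ S i ≤ #(topK σ S a) + b :=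
      meritRank_le_card_topK_add σ hσ
    simp only [mem_union, hia, false_or, mem_topK, mem_sdiff, hiS, true_and, not_false_eq_true]
    omega
  · simp [mem_topK, hiS]

end MeritRank

noncomputable section

variable {ι R : Type*} [Fintype ι] [DecidableEq ι] [Fintype R] [DecidableEq R]

/-- if everyone is eligible for the EWS category `e`, then the EWS-first
sequential rule (open first, `e` second) awards the open and EWS positions together to
exactly the `min(|I|, q^o + q^e)` highest-merit applicants. -/
theorem ewsFirst_universal_eligibility (σ : ι → ℝ) (hσ : Function.Injective σ)
    (q : Option R → ℕ) (elig : R → Finset ι) (e : R)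
    (helig : elig e = (Finset.univ : Finset ι)) (rest : List (Option R)) :
    ∀ I : Finset ι,
      seqAssign σ q elig ((none : Option R) :: some e :: rest) I none ∪
          seqAssign σ q elig ((none : Option R) :: some e :: rest) I (some e) =
        topK σ I (q none + q (some e)) := by
  intro I
  simp only [seqAssign, eligOf, helig, inter_univ, if_pos]
  exact topK_union_topK_sdiff σ hσ I (q none) (q (some e))
end
end
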